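/- arXiv:1011.6471 — 2 statements merged into one kernel-verified Lean document; each statement's English description precedes it below -/
import Mathlib

section
/- If f is uniformly continuous and piecewise convex on an interval I_{a,b} of ℝ, then f is absolutely continuous on I_{a,b}. -/
def AbsolutelyContinuousOn (f : ℝ → ℝ) (I : Set ℝ) : Prop :=
  ∀ ε > (0 : ℝ), ∃ δ > (0 : ℝ), ∀ (n : ℕ) (x y : Fin n → ℝ),
    (∀ i, x i ∈ I ∧ y i ∈ I ∧ x i < y i) →
    (∀ i j : Fin n, (i : ℕ) < (j : ℕ) → y i ≤ x j) →
    (∑ i, (y i - x i)) < δ →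
    (∑ i, |f (y i) - f (x i)|) < ε

/-- f is piecewise convex on I: there are finitely many partition points such that on the
initial piece, each middle piece, and the final piece (intersected with I), f is convex or
concave. -/
def PiecewiseConvexOn (f : ℝ → ℝ) (I : Set ℝ) : Prop :=
  ∃ (N : ℕ) (a : Fin (N + 1) → ℝ), StrictMono a ∧
    (ConvexOn ℝ (I ∩ Set.Iic (a 0)) f ∨ ConcaveOn ℝ (I ∩ Set.Iic (a 0)) f) ∧
    (∀ i : Fin N, ConvexOn ℝ (I ∩ Set.Icc (a i.castSucc) (a i.succ)) f ∨
      ConcaveOn ℝ (I ∩ Set.Icc (a i.castSucc) (a i.succ)) f) ∧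
    (ConvexOn ℝ (I ∩ Set.Ici (a (Fin.last N))) f ∨ ConcaveOn ℝ (I ∩ Set.Ici (a (Fin.last N))) f)

/-!
On a piece where `f` is convex, the increments of `f` over disjoint intervals on which it
increases only grow when the intervals are slid to the right until they abut (secant slopes of a
convex function increase), so their total is at most the single increment `f Y - f (Y - L)` over an
interval of the total length `L`, which uniform continuity makes small. Decreasing increments are
slid to the left, i.e. handled by the reflection `t ↦ -t`; concave pieces follow by negation.
Absolute continuity on two adjacent pieces glues, after clamping every interval to either side
of the junction, and an induction along the partition finishes the proof.
-/

open Finset Set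

section Convex

variable {J : Set ℝ} {f : ℝ → ℝ}

theorem ConvexOn.comp_neg (hf : ConvexOn ℝ J f) : ConvexOn ℝ (-J) (fun t => f (-t)) :=
  hf.comp_linearMap (-LinearMap.id)

theorem ConvexOn.map_add_sub_map_le (hf : ConvexOn ℝ J f) {u w h : ℝ} (hu : u ∈ J)
    (huh : u + h ∈ J) (hw : w ∈ J) (hwh : w + h ∈ J) (hh : 0 ≤ h) (huw : u ≤ w) :
    f (u + h) - f u ≤ f (w + h) - f w := by
  rcases hh.eq_or_lt with rfl | hh
  · simp
  have h₁ : slope f u (u + h) ≤ slope f u (w + h) :=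
    hf.slope_mono hu ⟨huh, by simpa using hh.ne'⟩ ⟨hwh, by simp; linarith⟩ (by linarith)
  have h₂ : slope f (w + h) u ≤ slope f (w + h) w :=
    hf.slope_mono hwh ⟨hu, by simp; linarith⟩ ⟨hw, by simpa using hh.ne'⟩ huw
  rw [slope_comm f u (w + h)] at h₁
  rw [slope_comm f (w + h) w] at h₂
  have := h₁.trans h₂
  simp only [slope_def_field, add_sub_cancel_left] at this
  exact (div_le_div_iff_of_pos_right hh).1 this

theorem ConvexOn.sum_sub_le_sub_sub_sum {ι : Type*} [LinearOrder ι] (hJ : Convex ℝ J)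
    (hf : ConvexOn ℝ J f) {x y : ι → ℝ} (s : Finset ι)
    (hxy : ∀ i ∈ s, x i ∈ J ∧ y i ∈ J ∧ x i < y i)
    (hord : ∀ i ∈ s, ∀ j ∈ s, i < j → y i ≤ x j) {Y : ℝ} (hY : Y ∈ J)
    (hyY : ∀ i ∈ s, y i ≤ Y) :
    Y - ∑ i ∈ s, (y i - x i) ∈ J ∧
      ∑ i ∈ s, (f (y i) - f (x i)) ≤ f Y - f (Y - ∑ i ∈ s, (y i - x i)) := by
  classical
  induction s using Finset.induction_on_max generalizing Y with
  | empty => simpa using hY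
  | insert m s hlt ih =>
    have hm := mem_insert_self m s
    obtain ⟨hxm, hym, hxym⟩ := hxy m hm
    have hymY := hyY m hm
    set Y' := Y - (y m - x m) with hY'def
    have hY' : Y' ∈ J := hJ.ordConnected.out hxm hY ⟨by linarith, by linarith⟩
    obtain ⟨hmem, hle⟩ := ih (fun i hi => hxy i (mem_insert_of_mem hi))
      (fun i hi j hj => hord i (mem_insert_of_mem hi) j (mem_insert_of_mem hj)) hY'
      (fun i hi => (hord i (mem_insert_of_mem hi) m hm (hlt i hi)).trans (by linarith))
    have hshift : f (y m) - f (x m) ≤ f Y - f Y' := by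
      have := hf.map_add_sub_map_le hxm (by simpa) hY' (by simpa [Y']) (sub_nonneg.2 hxym.le)
        (by linarith)
      simpa [Y'] using this
    have hY'' : Y - ∑ i ∈ insert m s, (y i - x i) = Y' - ∑ i ∈ s, (y i - x i) := by
      rw [sum_insert fun h => (hlt m h).false]; ring
    rw [hY'', sum_insert fun h => (hlt m h).false]
    exact ⟨hmem, by linarith⟩

variable {ι : Type*} [LinearOrder ι] [Fintype ι]

theorem ConvexOn.sum_posPart_sub_lt (hJ : Convex ℝ J) (hf : ConvexOn ℝ J f) {ε δ : ℝ}
    (hε : 0 < ε) (hδ : ∀ u ∈ J, ∀ v ∈ J, |u - v| < δ → |f u - f v| < ε) {x y : ι → ℝ}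
    (hxy : ∀ i, x i ∈ J ∧ y i ∈ J ∧ x i < y i) (hord : ∀ i j, i < j → y i ≤ x j)
    (hL : ∑ i, (y i - x i) < δ) :
    ∑ i, (f (y i) - f (x i))⁺ < ε := by
  classical
  set s := univ.filter fun i => 0 < f (y i) - f (x i)
  have hpos : ∑ i, (f (y i) - f (x i))⁺ = ∑ i ∈ s, (f (y i) - f (x i)) := by
    rw [sum_filter]; exact sum_congr rfl fun i _ => posPart_eq_ite_lt
  rcases s.eq_empty_or_nonempty with hs | hs
  · rwa [hpos, hs, sum_empty]
  set m := s.max' hs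
  have hym : ∀ i ∈ s, y i ≤ y m := fun i hi => by
    rcases (s.le_max' i hi).eq_or_lt with h | h
    · rw [h]
    · exact (hord i m h).trans (hxy m).2.2.le
  obtain ⟨hmem, hle⟩ :=
    hf.sum_sub_le_sub_sub_sum hJ s (fun i _ => hxy i) (fun i _ j _ => hord i j) (hxy m).2.1 hym
  set L := ∑ i ∈ s, (y i - x i)
  have hlen : ∀ i, 0 ≤ y i - x i := fun i => (sub_pos.2 (hxy i).2.2).le
  have hL0 : 0 ≤ L := sum_nonneg fun i _ => hlen i
  have hLδ : L ≤ ∑ i, (y i - x i) :=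
    sum_le_sum_of_subset_of_nonneg (subset_univ s) fun i _ _ => hlen i
  calc ∑ i, (f (y i) - f (x i))⁺ ≤ f (y m) - f (y m - L) := hpos ▸ hle
    _ ≤ |f (y m) - f (y m - L)| := le_abs_self _
    _ < ε := hδ _ (hxy m).2.1 _ hmem (by rw [sub_sub_cancel, abs_of_nonneg hL0]; linarith)

theorem ConvexOn.sum_negPart_sub_lt (hJ : Convex ℝ J) (hf : ConvexOn ℝ J f) {ε δ : ℝ}
    (hε : 0 < ε) (hδ : ∀ u ∈ J, ∀ v ∈ J, |u - v| < δ → |f u - f v| < ε) {x y : ι → ℝ}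
    (hxy : ∀ i, x i ∈ J ∧ y i ∈ J ∧ x i < y i) (hord : ∀ i j, i < j → y i ≤ x j)
    (hL : ∑ i, (y i - x i) < δ) :
    ∑ i, (f (y i) - f (x i))⁻ < ε := by
  have h := hf.comp_neg.sum_posPart_sub_lt (ι := ιᵒᵈ) (δ := δ) hJ.neg hε
    (fun u hu v hv huv => hδ _ hu _ hv (by rwa [neg_sub_neg, abs_sub_comm]))
    (x := fun i => -y (OrderDual.ofDual i)) (y := fun i => -x (OrderDual.ofDual i))
    (fun i => ⟨by simpa using (hxy _).2.1, by simpa using (hxy _).1, by simpa using (hxy _).2.2⟩)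
    (fun i j hij => neg_le_neg (hord _ _ hij)) (by simp only [neg_sub_neg]; exact hL)
  simp only [neg_neg, ← neg_sub (f (y _)), posPart_neg] at h
  exact h

end Convex

section AbsolutelyContinuousOn

variable {I J S : Set ℝ} {f : ℝ → ℝ}

theorem ConvexOn.absolutelyContinuousOn (hJ : Convex ℝ J) (hf : ConvexOn ℝ J f)
    (huc : UniformContinuousOn f J) : AbsolutelyContinuousOn f J := by
  intro ε hε
  obtain ⟨δ, hδ, hfδ⟩ := Metric.uniformContinuousOn_iff.1 huc (ε / 2) (half_pos hε)
  simp only [Real.dist_eq] at hfδ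
  refine ⟨δ, hδ, fun n x y hxy hord hL => ?_⟩
  calc ∑ i, |f (y i) - f (x i)|
      = ∑ i, (f (y i) - f (x i))⁺ + ∑ i, (f (y i) - f (x i))⁻ := by
        simp only [← sum_add_distrib, posPart_add_negPart]
    _ < ε / 2 + ε / 2 := add_lt_add (hf.sum_posPart_sub_lt hJ (half_pos hε) hfδ hxy hord hL)
        (hf.sum_negPart_sub_lt hJ (half_pos hε) hfδ hxy hord hL)
    _ = ε := add_halves ε

theorem AbsolutelyContinuousOn.neg (h : AbsolutelyContinuousOn f I) :
    AbsolutelyContinuousOn (-f) I := by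
  intro ε hε
  obtain ⟨δ, hδ, H⟩ := h ε hε
  refine ⟨δ, hδ, fun n x y hxy hord hL => ?_⟩
  simpa only [Pi.neg_apply, neg_sub_neg, abs_sub_comm] using H n x y hxy hord hL

theorem ConcaveOn.absolutelyContinuousOn (hJ : Convex ℝ J) (hf : ConcaveOn ℝ J f)
    (huc : UniformContinuousOn f J) : AbsolutelyContinuousOn f J := by
  simpa using (hf.neg.absolutelyContinuousOn hJ
    (uniformContinuous_neg.comp_uniformContinuousOn huc)).neg

theorem AbsolutelyContinuousOn.exists_pos_sum_abs_sub_lt (h : AbsolutelyContinuousOn f I)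
    {ε : ℝ} (hε : 0 < ε) :
    ∃ δ > 0, ∀ (n : ℕ) (x y : Fin n → ℝ), (∀ i, x i ≤ y i) →
      (∀ i, x i < y i → x i ∈ I ∧ y i ∈ I) → (∀ i j, i < j → y i ≤ x j) →
      ∑ i, (y i - x i) < δ → ∑ i, |f (y i) - f (x i)| < ε := by
  classical
  obtain ⟨δ, hδ, H⟩ := h ε hε
  refine ⟨δ, hδ, fun n x y hxy hmem hord hL => ?_⟩
  set s := univ.filter fun i => x i < y i
  set e := s.orderEmbOfFin rfl
  have hsum : ∀ g : Fin n → ℝ, ∑ k, g (e k) = ∑ i ∈ s, g i := fun g => by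
    conv_rhs => rw [← map_orderEmbOfFin_univ s rfl]
    exact (sum_map _ _ _).symm
  have he : ∀ k, x (e k) < y (e k) := fun k => (mem_filter.1 (s.orderEmbOfFin_mem rfl k)).2
  have hlen : ∑ i ∈ s, (y i - x i) ≤ ∑ i, (y i - x i) :=
    sum_le_sum_of_subset_of_nonneg (subset_univ s) fun i _ _ => sub_nonneg.2 (hxy i)
  have key := H s.card (x ∘ e) (y ∘ e) (fun k => ⟨(hmem _ (he k)).1, (hmem _ (he k)).2, he k⟩)
    (fun k l hkl => hord _ _ (e.strictMono hkl)) ((hsum fun i => y i - x i).trans_lt (by linarith))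
  calc ∑ i, |f (y i) - f (x i)| = ∑ i ∈ s, |f (y i) - f (x i)| :=
        (sum_filter_of_ne fun i _ hi => (hxy i).lt_of_ne fun h => hi (by simp [h])).symm
    _ = ∑ k, |f (y (e k)) - f (x (e k))| := (hsum fun i => |f (y i) - f (x i)|).symm
    _ < ε := key

theorem abs_sub_le_abs_sub_min_add_abs_sub_max (g : ℝ → ℝ) {x y : ℝ} (hxy : x ≤ y) (c : ℝ) :
    |g y - g x| ≤ |g (min y c) - g (min x c)| + |g (max y c) - g (max x c)| := by
  rcases le_total y c with hyc | hcy
  · simp [hyc, hxy.trans hyc]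
  rcases le_total c x with hcx | hxc
  · simp [hcx, hcx.trans hxy]
  simpa [hcy, hxc, add_comm] using abs_sub_le (g y) (g c) (g x)

theorem Convex.absolutelyContinuousOn_of_inter_Iic_of_inter_Ici (hS : Convex ℝ S) {c : ℝ}
    (h₁ : AbsolutelyContinuousOn f (S ∩ Iic c)) (h₂ : AbsolutelyContinuousOn f (S ∩ Ici c)) :
    AbsolutelyContinuousOn f S := by
  intro ε hε
  obtain ⟨δ₁, hδ₁, H₁⟩ := h₁.exists_pos_sum_abs_sub_lt (half_pos hε)
  obtain ⟨δ₂, hδ₂, H₂⟩ := h₂.exists_pos_sum_abs_sub_lt (half_pos hε)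
  refine ⟨min δ₁ δ₂, lt_min hδ₁ hδ₂, fun n x y hxy hord hL => ?_⟩
  have hmem : ∀ i, ∀ t, x i ≤ t → t ≤ y i → t ∈ S := fun i t hxt hty =>
    hS.ordConnected.out (hxy i).1 (hxy i).2.1 ⟨hxt, hty⟩
  have hlen : ∀ i, (min (y i) c - min (x i) c) + (max (y i) c - max (x i) c) = y i - x i :=
    fun i => by linarith [min_add_max (y i) c, min_add_max (x i) c]
  have hL₁ : ∑ i, (min (y i) c - min (x i) c) < δ₁ := by
    refine (sum_le_sum fun i _ => ?_).trans_lt (hL.trans_le (min_le_left _ _))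
    linarith [hlen i, max_le_max_right c (hxy i).2.2.le]
  have hL₂ : ∑ i, (max (y i) c - max (x i) c) < δ₂ := by
    refine (sum_le_sum fun i _ => ?_).trans_lt (hL.trans_le (min_le_right _ _))
    linarith [hlen i, min_le_min_right c (hxy i).2.2.le]
  calc ∑ i, |f (y i) - f (x i)|
      ≤ ∑ i, (|f (min (y i) c) - f (min (x i) c)| + |f (max (y i) c) - f (max (x i) c)|) :=
        sum_le_sum fun i _ => abs_sub_le_abs_sub_min_add_abs_sub_max f (hxy i).2.2.le c
    _ < ε / 2 + ε / 2 := by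
      rw [sum_add_distrib]
      refine add_lt_add (H₁ n _ _ (fun i => min_le_min_right c (hxy i).2.2.le) ?_
        (fun i j hij => min_le_min_right c (hord i j hij)) hL₁)
        (H₂ n _ _ (fun i => max_le_max_right c (hxy i).2.2.le) ?_
        (fun i j hij => max_le_max_right c (hord i j hij)) hL₂)
      · intro i hi
        have hxc : x i < c :=
          (min_lt_iff.1 (hi.trans_le (min_le_right _ _))).resolve_right (lt_irrefl c)
        rw [min_eq_left hxc.le]
        exact ⟨⟨(hxy i).1, hxc.le⟩, hmem i _ (le_min (hxy i).2.2.le hxc.le) (min_le_left _ _),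
          mem_Iic.2 (min_le_right _ _)⟩
      · intro i hi
        have hcy : c < y i :=
          (lt_max_iff.1 ((le_max_right _ _).trans_lt hi)).resolve_right (lt_irrefl c)
        rw [max_eq_left hcy.le]
        exact ⟨⟨hmem i _ (le_max_left _ _) (max_le (hxy i).2.2.le hcy.le),
          mem_Ici.2 (le_max_right _ _)⟩, (hxy i).2.1, hcy.le⟩
    _ = ε := add_halves ε

end AbsolutelyContinuousOn

theorem absolutelyContinuousOn_of_piecewiseConvex
    (I : Set ℝ) (hI : Convex ℝ I) (f : ℝ → ℝ)
    (hpc : PiecewiseConvexOn f I)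
    (huc : ∀ ε > (0 : ℝ), ∃ δ > (0 : ℝ), ∀ x ∈ I, ∀ y ∈ I, |x - y| < δ → |f x - f y| < ε) :
    AbsolutelyContinuousOn f I := by
  obtain ⟨N, a, ha, hfirst, hmid, hlast⟩ := hpc
  have hucI : UniformContinuousOn f I :=
    Metric.uniformContinuousOn_iff.2 (by simpa only [Real.dist_eq] using huc)
  have hpiece : ∀ K : Set ℝ, Convex ℝ K →
      (ConvexOn ℝ (I ∩ K) f ∨ ConcaveOn ℝ (I ∩ K) f) → AbsolutelyContinuousOn f (I ∩ K) :=
    fun K hK hf => hf.elim (·.absolutelyContinuousOn (hI.inter hK) (hucI.mono inter_subset_left))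
      (·.absolutelyContinuousOn (hI.inter hK) (hucI.mono inter_subset_left))
  have hIic : ∀ k, AbsolutelyContinuousOn f (I ∩ Iic (a k)) := by
    intro k
    induction k using Fin.induction with
    | zero => exact hpiece _ (convex_Iic _) hfirst
    | succ k ih =>
      refine (hI.inter (convex_Iic _)).absolutelyContinuousOn_of_inter_Iic_of_inter_Ici
        (c := a k.castSucc) ?_ ?_
      · rwa [inter_assoc, Iic_inter_Iic, inf_eq_right.2 (ha.monotone k.castSucc_le_succ)]
      · rw [inter_assoc, Iic_inter_Ici]
        exact hpiece _ (convex_Icc _ _) (hmid k)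
  exact hI.absolutelyContinuousOn_of_inter_Iic_of_inter_Ici (hIic (Fin.last N))
    (hpiece _ (convex_Ici _) hlast)
end

section
/- Let f be monotone increasing and concave on an interval I, and let (x_1, y_1), ..., (x_n, y_n) be pairwise nonoverlapping subintervals of I with x_1 < x_2 < ... < x_n. Set σ_i = y_i − x_i and z_1 = x_1, z_{i+1} = x_1 + σ_1 + ... + σ_i. Then Σ_{i=1}^n (f(y_i) − f(x_i)) ≤ f(z_{n+1}) − f(z_1), provided all z_i ∈ I. -/
/-!
Concavity makes the increment of `f` over an interval of fixed length `t` decrease as the interval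
moves to the right: `f (b + t) - f b ≤ f (a + t) - f a` for `a ≤ b`. The glued point `z_i` lies to
the left of `x_i`, so `f (y_i) - f (x_i) ≤ f (z_{i+1}) - f (z_i)`, and the right-hand sides
telescope.
-/

open Finset

theorem Fin.sum_univ_succ_sub_castSucc {G : Type*} [AddCommGroup G] {n : ℕ}
    (g : Fin (n + 1) → G) : ∑ i : Fin n, (g i.succ - g i.castSucc) = g (Fin.last n) - g 0 := by
  induction n with
  | zero => simp
  | succ n ih =>
    rw [Fin.sum_univ_castSucc, Fin.succ_last]
    have := ih (g ∘ Fin.castSucc)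
    simp only [Function.comp_apply, Fin.castSucc_zero, ← Fin.succ_castSucc] at this
    rw [this]
    abel

section

variable {𝕜 : Type*} [Field 𝕜] [LinearOrder 𝕜] [IsStrictOrderedRing 𝕜]

theorem ConcaveOn.map_add_sub_map_le_of_le {s : Set 𝕜} {f : 𝕜 → 𝕜} (hf : ConcaveOn 𝕜 s f)
    {a b t : 𝕜} (hab : a ≤ b) (ht : 0 ≤ t) (ha : a ∈ s) (hbt : b + t ∈ s) :
    f (b + t) - f b ≤ f (a + t) - f a := by
  rcases (add_nonneg (sub_nonneg.2 hab) ht).eq_or_lt with hd | hd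
  · obtain ⟨rfl, rfl⟩ : b = a ∧ t = 0 := by constructor <;> linarith
    simp
  -- `b` and `a + t` are the convex combinations of `a` and `b + t` with swapped weights.
  set l := t / (b - a + t)
  have hl : l ≤ 1 := (div_le_one hd).2 (by linarith)
  have hb := hf.2 ha hbt (div_nonneg ht hd.le) (sub_nonneg.2 hl) (add_sub_cancel l 1)
  have hat := hf.2 ha hbt (sub_nonneg.2 hl) (div_nonneg ht hd.le) (sub_add_cancel 1 l)
  have e1 : l • a + (1 - l) • (b + t) = b := by simp only [l, smul_eq_mul]; field_simp; ring
  have e2 : (1 - l) • a + l • (b + t) = a + t := by simp only [l, smul_eq_mul]; field_simp; ring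
  rw [e1] at hb
  rw [e2] at hat
  simp only [smul_eq_mul] at hb hat
  linear_combination hb + hat

variable {n : ℕ} {x y : Fin n → 𝕜} {z : Fin (n + 1) → 𝕜}

theorem ConcaveOn.sum_sub_le_of_glued {s : Set 𝕜} {f : 𝕜 → 𝕜} (hf : ConcaveOn 𝕜 s f)
    (hxy : ∀ i, x i ≤ y i) (hz_succ : ∀ i, z i.succ = z i.castSucc + (y i - x i))
    (hzx : ∀ i, z i.castSucc ≤ x i) (hzs : ∀ i, z i ∈ s) (hys : ∀ i, y i ∈ s) :
    ∑ i, (f (y i) - f (x i)) ≤ f (z (Fin.last n)) - f (z 0) := by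
  refine (sum_le_sum fun i _ ↦ ?_).trans_eq (Fin.sum_univ_succ_sub_castSucc (f ∘ z))
  have := hf.map_add_sub_map_le_of_le (hzx i) (sub_nonneg.2 (hxy i)) (hzs _)
    (by rw [add_sub_cancel]; exact hys i)
  rwa [add_sub_cancel, ← hz_succ] at this

theorem glued_castSucc_le (hn : 0 < n) (hsep : ∀ i j : Fin n, i < j → y i ≤ x j)
    (hz0 : z 0 = x ⟨0, hn⟩) (hz_succ : ∀ i, z i.succ = z i.castSucc + (y i - x i)) (i : Fin n) :
    z i.castSucc ≤ x i := by
  obtain ⟨k, hk⟩ := i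
  induction k with
  | zero => exact hz0.le
  | succ k ih =>
    have hstep := hz_succ ⟨k, by omega⟩
    have hyx := hsep ⟨k, by omega⟩ ⟨k + 1, hk⟩ (by simp [Fin.lt_def])
    simp only [Fin.succ_mk, Fin.castSucc_mk] at hstep ih ⊢
    linarith [ih (by omega)]

end

theorem sum_increments_le_glued_general (I : Set ℝ) (f : ℝ → ℝ) (n : ℕ) (hn : 0 < n)
    (hconc : ConcaveOn ℝ I f)
    (x y : Fin n → ℝ)
    (hmem : ∀ i, x i ∈ I ∧ y i ∈ I ∧ x i < y i)
    (hsep : ∀ i j : Fin n, (i : ℕ) < (j : ℕ) → y i ≤ x j)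
    (z : Fin (n + 1) → ℝ)
    (hz : ∀ i : Fin (n + 1),
      z i = x ⟨0, hn⟩ + ∑ j ∈ Finset.univ.filter (fun j : Fin n => (j : ℕ) < (i : ℕ)),
        (y j - x j))
    (hzI : ∀ i, z i ∈ I) :
    ∑ i, (f (y i) - f (x i)) ≤ f (z (Fin.last n)) - f (z 0) := by
  have hz0 : z 0 = x ⟨0, hn⟩ := by simp [hz]
  have hz_succ : ∀ i : Fin n, z i.succ = z i.castSucc + (y i - x i) := by
    intro i
    have hfilter : univ.filter (fun j : Fin n ↦ (j : ℕ) < i.succ) =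
        insert i (univ.filter (fun j : Fin n ↦ (j : ℕ) < i.castSucc)) := by
      ext j
      simp [le_iff_eq_or_lt, Fin.val_inj]
    rw [hz, hz, hfilter, sum_insert (by simp)]
    ring
  exact hconc.sum_sub_le_of_glued (fun i ↦ (hmem i).2.2.le) hz_succ
    (glued_castSucc_le hn hsep hz0 hz_succ) hzI (fun i ↦ (hmem i).2.1)

theorem sum_increments_le_glued (I : Set ℝ) (f : ℝ → ℝ) (n : ℕ) (hn : 0 < n)
    (hmono : MonotoneOn f I) (hconc : ConcaveOn ℝ I f)
    (x y : Fin n → ℝ)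
    (hmem : ∀ i, x i ∈ I ∧ y i ∈ I ∧ x i < y i)
    (hsep : ∀ i j : Fin n, (i : ℕ) < (j : ℕ) → y i ≤ x j)
    (z : Fin (n + 1) → ℝ)
    (hz : ∀ i : Fin (n + 1),
      z i = x ⟨0, hn⟩ + ∑ j ∈ Finset.univ.filter (fun j : Fin n => (j : ℕ) < (i : ℕ)),
        (y j - x j))
    (hzI : ∀ i, z i ∈ I) :
    ∑ i, (f (y i) - f (x i)) ≤ f (z (Fin.last n)) - f (z 0) :=
  sum_increments_le_glued_general I f n hn hconc x y hmem hsep z hz hzI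
end
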